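/- arXiv:2003.02727 — 3 statements merged into one kernel-verified Lean document; each statement's English description precedes it below -/
import Mathlib

section
/- Let d ≥ 2 be an integer and let Z be a finite set of pairwise non-proportional nonzero vectors in ℂ³ such that the only homogeneous polynomial of degree d in ℂ[x₀,x₁,x₂] vanishing at every element of Z is the zero polynomial. Then for every p ∈ Z, the only homogeneous polynomial of degree d−2 vanishing at every element of Z \ {p} is the zero polynomial. -/
/-!
A nonzero linear form `L` vanishing at `p` exists in any number `≥ 2` of variables. If `f` has
degree `d - 2` and vanishes on `Z \ {p}`, then `f * L ^ 2` has degree `d` and vanishes on all of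
`Z`, so it is zero; since `L ≠ 0` and the polynomial ring is a domain, `f = 0`.
-/

/-- Two vectors are proportional if one is a scalar multiple of the other. -/
def PairwiseNonProportional (S : Finset (Fin 3 → ℂ)) : Prop :=
  ∀ u ∈ S, ∀ v ∈ S, u ≠ v → ∀ c : ℂ, v ≠ c • u

namespace MvPolynomial

variable {σ K : Type*} [CommRing K]

theorem exists_isHomogeneous_one_ne_zero_eval_eq_zero [Nontrivial K] {i j : σ} (hij : i ≠ j)
    (p : σ → K) : ∃ L : MvPolynomial σ K, L.IsHomogeneous 1 ∧ L ≠ 0 ∧ eval p L = 0 := by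
  by_cases hpi : p i = 0
  · exact ⟨X i, isHomogeneous_X K i, X_ne_zero i, by simpa using hpi⟩
  refine ⟨C (p i) * X j - C (p j) * X i, ?_, ?_, by simp [mul_comm]⟩
  · exact (isHomogeneous_C_mul_X (p i) j).sub (isHomogeneous_C_mul_X (p j) i)
  · intro h
    classical
    have := congrArg (coeff (Finsupp.single j 1)) h
    exact hpi (by simpa [coeff_X, Finsupp.single_left_inj one_ne_zero, hij] using this)

theorem eq_zero_of_eval_eq_zero_on_erase [IsDomain K] [DecidableEq (σ → K)]
    {d k : ℕ} (hk : k ≤ d) {Z : Finset (σ → K)}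
    (hZ : ∀ g ∈ homogeneousSubmodule σ K d, (∀ v ∈ Z, eval v g = 0) → g = 0)
    {p : σ → K} {q : MvPolynomial σ K} (hq : q.IsHomogeneous k) (hq0 : q ≠ 0)
    (hqp : eval p q = 0) {f : MvPolynomial σ K} (hf : f ∈ homogeneousSubmodule σ K (d - k))
    (hfZ : ∀ v ∈ Z.erase p, eval v f = 0) : f = 0 := by
  have hfq : f * q ∈ homogeneousSubmodule σ K d := by
    simpa [Nat.sub_add_cancel hk] using (mem_homogeneousSubmodule _ _).mp hf |>.mul hq
  have hfq0 : f * q = 0 := hZ _ hfq fun v hv => by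
    rcases eq_or_ne v p with rfl | hvp
    · simp [hqp]
    · simp [hfZ v (Finset.mem_erase.mpr ⟨hvp, hv⟩)]
  exact (mul_eq_zero.mp hfq0).resolve_right hq0

end MvPolynomial

theorem no_form_on_erase_of_no_form_general (d : ℕ) (hd : 2 ≤ d) (Z : Finset (Fin 3 → ℂ))
    (hZ : ∀ f : MvPolynomial (Fin 3) ℂ,
      f ∈ MvPolynomial.homogeneousSubmodule (Fin 3) ℂ d →
      (∀ v ∈ Z, MvPolynomial.eval v f = 0) → f = 0) :
    ∀ p ∈ Z, ∀ f : MvPolynomial (Fin 3) ℂ,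
      f ∈ MvPolynomial.homogeneousSubmodule (Fin 3) ℂ (d - 2) →
      (∀ v ∈ Z.erase p, MvPolynomial.eval v f = 0) → f = 0 := by
  intro p _ f hf hfZ
  obtain ⟨L, hL, hL0, hLp⟩ :=
    MvPolynomial.exists_isHomogeneous_one_ne_zero_eval_eq_zero (i := 0) (j := 1) (by decide) p
  exact MvPolynomial.eq_zero_of_eval_eq_zero_on_erase hd hZ (by simpa using hL.pow 2)
    (pow_ne_zero 2 hL0) (by simp [hLp]) hf hfZ

/-- Lemma 3.4 (reduced case): if no nonzero degree-`d` form vanishes on `Z`, then for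
every `p ∈ Z` no nonzero degree-`(d-2)` form vanishes on `Z \ {p}`. -/
theorem no_form_on_erase_of_no_form (d : ℕ) (hd : 2 ≤ d) (Z : Finset (Fin 3 → ℂ))
    (hZ0 : ∀ v ∈ Z, v ≠ 0) (hZp : PairwiseNonProportional Z)
    (hZ : ∀ f : MvPolynomial (Fin 3) ℂ,
      f ∈ MvPolynomial.homogeneousSubmodule (Fin 3) ℂ d →
      (∀ v ∈ Z, MvPolynomial.eval v f = 0) → f = 0) :
    ∀ p ∈ Z, ∀ f : MvPolynomial (Fin 3) ℂ,
      f ∈ MvPolynomial.homogeneousSubmodule (Fin 3) ℂ (d - 2) →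
      (∀ v ∈ Z.erase p, MvPolynomial.eval v f = 0) → f = 0 :=
  no_form_on_erase_of_no_form_general d hd Z hZ
end

section
/- Let F be a nonzero homogeneous polynomial of degree e in ℂ[x₀,x₁,x₂], let S be a finite set of nonzero vectors in ℂ³ at each of which F vanishes, let p ∈ ℂ³ be a nonzero vector with F(p) ≠ 0, and let m be a natural number. Then the complex vector space of homogeneous polynomials of degree e+m vanishing at p and at every element of S has dimension at least (m+1)(m+2)/2 − 1. -/
/-!
Multiplication by `F` embeds the degree-`m` forms vanishing at `p` into the degree-`(e + m)`
forms vanishing at `p` and on `S`. The former are the kernel of evaluation at `p`, a linear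
functional on the `(m + 2).choose 2`-dimensional space of all degree-`m` forms, so they have
codimension at most one there.
-/

/-- The space of homogeneous polynomials of degree `d` in three variables vanishing at
every point of `S`. -/
noncomputable def vanishingForms (d : ℕ) (S : Set (Fin 3 → ℂ)) :
    Submodule ℂ (MvPolynomial (Fin 3) ℂ) :=
  MvPolynomial.homogeneousSubmodule (Fin 3) ℂ d ⊓
    ⨅ v ∈ S, LinearMap.ker (MvPolynomial.aeval (R := ℂ) v).toLinearMap

open MvPolynomial Module

namespace MvPolynomial

variable {σ R : Type*} [CommRing R]

instance [Finite σ] (n : ℕ) : Module.Finite R (homogeneousSubmodule σ R n) :=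
  Module.Finite.iff_fg.mpr (homogeneousSubmodule_fg σ R n)

theorem finrank_homogeneousSubmodule [Fintype σ] [Nontrivial R] (n : ℕ) :
    finrank R (homogeneousSubmodule σ R n) = (Fintype.card σ + n - 1).choose n := by
  classical
  have hdeg : {d : σ →₀ ℕ | d.degree = n} =
      ((Finset.univ : Finset σ).finsuppAntidiag n : Set (σ →₀ ℕ)) := by
    ext d
    simp [Finsupp.degree_eq_sum]
  rw [homogeneousSubmodule_eq_finsupp_supported, hdeg]
  change finrank R (restrictSupport R _) = _
  simp [finrank_eq_card_basis (basisRestrictSupport R _),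
    Finset.card_finsuppAntidiag_nat_eq_choose]

end MvPolynomial

theorem Submodule.finrank_le_finrank_inf_ker_add_one {K V : Type*} [DivisionRing K]
    [AddCommGroup V] [Module K V] (W : Submodule K V) [FiniteDimensional K W]
    (f : V →ₗ[K] K) : finrank K W ≤ finrank K ↥(W ⊓ LinearMap.ker f) + 1 := by
  rw [← Submodule.map_comap_subtype, Submodule.finrank_map_subtype_eq, ← LinearMap.ker_comp,
    ← LinearMap.finrank_range_add_finrank_ker (f ∘ₗ W.subtype)]
  have hrange := Submodule.finrank_le (LinearMap.range (f ∘ₗ W.subtype))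
  rw [finrank_self] at hrange
  omega

instance (d : ℕ) (S : Set (Fin 3 → ℂ)) : FiniteDimensional ℂ (vanishingForms d S) :=
  Submodule.finiteDimensional_of_le inf_le_left

theorem mem_vanishingForms {d : ℕ} {S : Set (Fin 3 → ℂ)} {f : MvPolynomial (Fin 3) ℂ} :
    f ∈ vanishingForms d S ↔ f.IsHomogeneous d ∧ ∀ v ∈ S, eval v f = 0 := by
  simp [vanishingForms, Submodule.mem_iInf]

theorem vanishingForms_singleton (d : ℕ) (p : Fin 3 → ℂ) :
    vanishingForms d {p} =
      homogeneousSubmodule (Fin 3) ℂ d ⊓ LinearMap.ker (aeval (R := ℂ) p).toLinearMap := by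
  simp [vanishingForms]

theorem mul_mem_vanishingForms {d₁ d₂ : ℕ} {S T : Set (Fin 3 → ℂ)}
    {f g : MvPolynomial (Fin 3) ℂ} (hf : f ∈ vanishingForms d₁ S)
    (hg : g ∈ vanishingForms d₂ T) :
    f * g ∈ vanishingForms (d₁ + d₂) (S ∪ T) := by
  rw [mem_vanishingForms] at *
  refine ⟨hf.1.mul hg.1, fun v hv => ?_⟩
  rcases hv with hv | hv
  · simp [hf.2 v hv]
  · simp [hg.2 v hv]

theorem finrank_vanishingForms_le_union {e m : ℕ} {S : Set (Fin 3 → ℂ)}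
    {F : MvPolynomial (Fin 3) ℂ} (hF : F ∈ vanishingForms e S) (hF0 : F ≠ 0)
    (T : Set (Fin 3 → ℂ)) :
    finrank ℂ (vanishingForms m T) ≤ finrank ℂ (vanishingForms (e + m) (S ∪ T)) := by
  let mulF := (LinearMap.mulLeft ℂ F).restrict
    fun g (hg : g ∈ vanishingForms m T) => mul_mem_vanishingForms hF hg
  refine LinearMap.finrank_le_finrank_of_injective (f := mulF) fun g h hgh => ?_
  exact Subtype.ext (mul_left_cancel₀ hF0 (congrArg Subtype.val hgh))

theorem finrank_homogeneousSubmodule_fin_three (n : ℕ) :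
    finrank ℂ (homogeneousSubmodule (Fin 3) ℂ n) = (n + 1) * (n + 2) / 2 := by
  rw [finrank_homogeneousSubmodule, Fintype.card_fin, show 3 + n - 1 = n + 2 by omega,
    Nat.choose_symm_add, Nat.choose_two_right, show n + 2 - 1 = n + 1 by omega, Nat.mul_comm]

theorem finrank_vanishingForms_ge_general (e m : ℕ) (F : MvPolynomial (Fin 3) ℂ)
    (hF : F ∈ MvPolynomial.homogeneousSubmodule (Fin 3) ℂ e) (hF0 : F ≠ 0)
    (S : Finset (Fin 3 → ℂ))
    (hSF : ∀ v ∈ S, MvPolynomial.eval v F = 0)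
    (p : Fin 3 → ℂ) :
    (m + 1) * (m + 2) / 2 - 1 ≤
      Module.finrank ℂ (vanishingForms (e + m) (insert p ↑S)) := by
  have hFS : F ∈ vanishingForms e S := mem_vanishingForms.mpr ⟨hF, hSF⟩
  have hcodim := (homogeneousSubmodule (Fin 3) ℂ m).finrank_le_finrank_inf_ker_add_one
    (aeval (R := ℂ) p).toLinearMap
  rw [finrank_homogeneousSubmodule_fin_three, ← vanishingForms_singleton] at hcodim
  have hmul := finrank_vanishingForms_le_union hFS hF0 {p} (m := m)
  rw [Set.union_singleton] at hmul
  omega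

/-- If a nonzero degree-`e` form `F` vanishes on `S` but not at `p`, then the space of
degree-`(e+m)` forms vanishing at `p` and on `S` has dimension at least
`(m+1)(m+2)/2 - 1`. -/
theorem finrank_vanishingForms_ge (e m : ℕ) (F : MvPolynomial (Fin 3) ℂ)
    (hF : F ∈ MvPolynomial.homogeneousSubmodule (Fin 3) ℂ e) (hF0 : F ≠ 0)
    (S : Finset (Fin 3 → ℂ)) (hS0 : ∀ v ∈ S, v ≠ 0)
    (hSF : ∀ v ∈ S, MvPolynomial.eval v F = 0)
    (p : Fin 3 → ℂ) (hp0 : p ≠ 0) (hpF : MvPolynomial.eval p F ≠ 0) :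
    (m + 1) * (m + 2) / 2 - 1 ≤
      Module.finrank ℂ (vanishingForms (e + m) (insert p ↑S)) :=
  finrank_vanishingForms_ge_general e m F hF hF0 S hSF p
end

section
/- Let k ≥ 2 and c₂ be integers with c₂ ≥ k² + k. Then there exists a set Z of c₂ + k² pairwise non-proportional nonzero vectors in ℂ³ such that (i) the only homogeneous polynomial of degree 2k − 1 in ℂ[x₀,x₁,x₂] vanishing at every element of Z is zero, and (ii) for every p ∈ Z, the only homogeneous polynomial of degree 2k − 3 vanishing at every element of Z \ {p} is zero. -/
/-!
Take `Z` to be the points `(1, j, a)` of the triangular grid `j + a < 2k`, which has `2k² + k`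
points, together with `c₂ - k² - k` further points on the line `x₁ = 2k x₀`. The grid meets the
line `x₁ = j x₀` in `2k - j` points, and after removing one point of `Z` at least `2k - 1 - j`
remain. A form vanishing on the chart `x₀ = 1` is zero, so both conditions follow from one
interpolation fact: a polynomial of degree `< n` in two variables that vanishes at `≥ n - j`
points of the line `y = b j` for each `j < n` (with distinct `b j`) is zero. Indeed its
restriction to `y = b 0` has more zeros than its degree, so `y - b 0` divides it, and the
quotient satisfies the same hypothesis for the other `n - 1` lines.
-/

open Finset

namespace MvPolynomial

section

variable {R : Type*} [CommSemiring R]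

theorem IsHomogeneous.eval_smul {σ : Type*} {f : MvPolynomial σ R} {d : ℕ}
    (hf : f.IsHomogeneous d) (c : R) (v : σ → R) :
    eval (c • v) f = c ^ d * eval v f := by
  conv_lhs => rw [f.as_sum]
  conv_rhs => rw [f.as_sum]
  rw [map_sum, map_sum, Finset.mul_sum]
  refine Finset.sum_congr rfl fun m hm => ?_
  have hdeg : ∑ i ∈ m.support, m i = d := by
    simpa [Finsupp.weight_apply, Finsupp.sum] using hf (mem_support_iff.1 hm)
  simp only [eval_monomial, Finsupp.prod, Pi.smul_apply, smul_eq_mul, mul_pow,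
    Finset.prod_mul_distrib, Finset.prod_pow_eq_pow_sum, hdeg]
  ring

theorem totalDegree_eval_C_finSuccEquiv_le {n : ℕ} (f : MvPolynomial (Fin (n + 1)) R) (r : R) :
    ((finSuccEquiv R n f).eval (C r)).totalDegree ≤ f.totalDegree := by
  rw [Polynomial.eval_eq_sum]
  refine totalDegree_finsetSum_le fun i hi => ?_
  calc ((finSuccEquiv R n f).coeff i * C r ^ i).totalDegree
      ≤ ((finSuccEquiv R n f).coeff i).totalDegree
          + (C r ^ i : MvPolynomial (Fin n) R).totalDegree := totalDegree_mul _ _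
    _ ≤ f.totalDegree := by
        rw [← C_pow, totalDegree_C, add_zero]
        exact (Nat.le_add_right _ _).trans
          (totalDegree_coeff_finSuccEquiv_add_le f i (Polynomial.mem_support_iff.1 hi))

theorem eval_eval_C_finSuccEquiv {n : ℕ} (f : MvPolynomial (Fin (n + 1)) R) (r : R)
    (s : Fin n → R) : eval s ((finSuccEquiv R n f).eval (C r)) = eval (Fin.cons r s) f := by
  rw [eval_eq_eval_mv_eval', Polynomial.eval_map, ← Polynomial.eval₂_hom, eval_C]

end

section

variable {K : Type*} [CommRing K] [IsDomain K]

theorem X_zero_sub_C_dvd_of_forall_eval_eq_zero {g : MvPolynomial (Fin 2) K} {c : K}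
    {A : Finset K} (hdeg : g.totalDegree < #A) (hA : ∀ a ∈ A, eval ![c, a] g = 0) :
    X 0 - C c ∣ g := by
  have hrow : (finSuccEquiv K 1 g).eval (C c) = 0 := by
    refine eq_zero_of_eval_zero_at_prod_finset _ (fun _ => A) (fun i => ?_) fun x hx => ?_
    · exact ((degreeOf_le_totalDegree _ i).trans
        (totalDegree_eval_C_finSuccEquiv_le g c)).trans_lt hdeg
    · have hx' : (Fin.cons c x : Fin 2 → K) = ![c, x 0] := by
        ext i; fin_cases i <;> rfl
      rw [eval_eval_C_finSuccEquiv, hx']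
      exact hA (x 0) (hx 0)
  rw [← map_dvd_iff (finSuccEquiv K 1), map_sub, finSuccEquiv_X_zero]
  simpa [finSuccEquiv_apply] using Polynomial.dvd_iff_isRoot.2 hrow

theorem totalDegree_lt_totalDegree_X_sub_C_mul {σ : Type*} {h : MvPolynomial σ K} (hh : h ≠ 0)
    (i : σ) (c : K) : h.totalDegree < ((X i - C c) * h).totalDegree := by
  have hX : (X i - C c : MvPolynomial σ K).totalDegree = 1 := by
    rw [sub_eq_add_neg, ← C_neg, totalDegree_add_eq_left_of_totalDegree_lt] <;>
      simp [totalDegree_X]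
  rw [totalDegree_mul_of_isDomain (fun h0 => by simp [h0] at hX) hh, hX]
  omega

theorem eq_zero_of_forall_eval_rows {n : ℕ} {g : MvPolynomial (Fin 2) K}
    (hg : g.totalDegree < n) {b : ℕ → K} (hb : Function.Injective b) (A : ℕ → Finset K)
    (hA : ∀ j < n, n - j ≤ #(A j)) (hvan : ∀ j < n, ∀ a ∈ A j, eval ![b j, a] g = 0) :
    g = 0 := by
  induction n generalizing g b A with
  | zero => exact absurd hg (Nat.not_lt_zero _)
  | succ n ih =>
    obtain ⟨h, rfl⟩ := X_zero_sub_C_dvd_of_forall_eval_eq_zero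
      (hg.trans_le (by simpa using hA 0 n.succ_pos)) (hvan 0 n.succ_pos)
    rcases eq_or_ne h 0 with rfl | hh
    · exact mul_zero _
    refine absurd (ih ((totalDegree_lt_totalDegree_X_sub_C_mul hh 0 (b 0)).trans_le
      (Nat.lt_succ_iff.1 hg)) (hb.comp Nat.succ_injective) (fun j => A (j + 1))
      (fun j hj => by simpa using hA (j + 1) (by omega)) fun j hj a ha => ?_) hh
    have hrow := hvan (j + 1) (by omega) a ha
    have hb0 : b (j + 1) - b 0 ≠ 0 := sub_ne_zero.2 (hb.ne j.succ_ne_zero)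
    simpa [hb0] using hrow

end

theorem IsHomogeneous.eq_zero_of_forall_eval_cons_one {K : Type*} [Field K] [Infinite K]
    {m d : ℕ} {f : MvPolynomial (Fin (m + 1)) K} (hf : f.IsHomogeneous d)
    (h : ∀ v : Fin m → K, eval (Fin.cons 1 v) f = 0) : f = 0 := by
  -- The factor `X 0` disposes of the points with `x 0 = 0`; the others are multiples of
  -- points of the chart.
  have hXf : X 0 * f = 0 := by
    apply MvPolynomial.funext
    intro x
    rw [map_mul, eval_X, map_zero]
    rcases eq_or_ne (x 0) 0 with hx | hx
    · rw [hx, zero_mul]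
    have hx' : x = x 0 • Fin.cons 1 fun i => x i.succ / x 0 := by
      ext i
      refine Fin.cases ?_ (fun i => ?_) i
      · simp
      · simp [mul_div_cancel₀ _ hx]
    rw [hx', hf.eval_smul, h, mul_zero, mul_zero]
  exact (mul_eq_zero.1 hXf).resolve_left (X_ne_zero 0)

theorem IsHomogeneous.eq_zero_of_forall_eval_natCast_rows {K : Type*} [Field K] [CharZero K]
    {d n : ℕ} {f : MvPolynomial (Fin 3) K} (hf : f.IsHomogeneous d) (hd : d < n)
    (S : Finset (ℕ × ℕ)) (hS : ∀ j < n, n - j ≤ #(S.filter (·.1 = j)))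
    (hvan : ∀ q ∈ S, eval ![1, (q.1 : K), q.2] f = 0) : f = 0 := by
  classical
  refine hf.eq_zero_of_forall_eval_cons_one fun v => ?_
  suffices hg : (finSuccEquiv K 2 f).eval (C 1) = 0 by
    rw [← eval_eval_C_finSuccEquiv, hg, map_zero]
  refine eq_zero_of_forall_eval_rows ((totalDegree_eval_C_finSuccEquiv_le f 1).trans_lt
    (hf.totalDegree_le.trans_lt hd)) Nat.cast_injective
    (fun j => (S.filter (·.1 = j)).image fun q => (q.2 : K)) (fun j hj => ?_) fun j _ a ha => ?_
  · have hinj : Set.InjOn (fun q : ℕ × ℕ => (q.2 : K)) (S.filter (·.1 = j)) :=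
      fun q hq q' hq' hqq' => Prod.ext ((mem_filter.1 hq).2.trans (mem_filter.1 hq').2.symm)
        (Nat.cast_injective hqq')
    rw [card_image_of_injOn hinj]
    exact hS j hj
  · obtain ⟨q, hq, rfl⟩ := mem_image.1 ha
    obtain ⟨hqS, rfl⟩ := mem_filter.1 hq
    rw [eval_eval_C_finSuccEquiv]
    exact hvan q hqS

end MvPolynomial

theorem pairwiseNonProportional_of_forall_apply_zero_eq_one {S : Finset (Fin 3 → ℂ)}
    (hS : ∀ v ∈ S, v 0 = 1) : PairwiseNonProportional S := by
  rintro u hu v hv huv c rfl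
  have hc : c = 1 := by simpa [hS u hu] using hS _ hv
  exact huv (by rw [hc, one_smul])

def triangle (n : ℕ) : Finset (ℕ × ℕ) := (range n ×ˢ range n).filter fun q => q.1 + q.2 < n

theorem mem_triangle {n : ℕ} {q : ℕ × ℕ} : q ∈ triangle n ↔ q.1 + q.2 < n := by
  simp only [triangle, mem_filter, mem_product, mem_range]
  omega

theorem filter_fst_triangle (n j : ℕ) :
    (triangle n).filter (·.1 = j) = {j} ×ˢ range (n - j) := by
  ext ⟨a, b⟩
  simp only [mem_filter, mem_triangle, mem_product, mem_range, mem_singleton]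
  omega

theorem card_triangle_mul_two (n : ℕ) : #(triangle n) * 2 = n * (n + 1) := by
  rw [card_eq_sum_card_fiberwise (f := Prod.fst) (t := range n) fun q hq =>
    mem_range.2 ((Nat.le_add_right _ _).trans_lt (mem_triangle.1 hq))]
  simp only [filter_fst_triangle, card_product, card_singleton, card_range, one_mul]
  induction n with
  | zero => rfl
  | succ n ih =>
    simp only [sum_range_succ', Nat.add_sub_add_right, Nat.sub_zero, add_mul, ih]
    ring

def triangleUnionRow (n e : ℕ) : Finset (ℕ × ℕ) := triangle n ∪ {n} ×ˢ range e

theorem card_triangleUnionRow_mul_two (n e : ℕ) :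
    #(triangleUnionRow n e) * 2 = n * (n + 1) + 2 * e := by
  have hdisj : Disjoint (triangle n) ({n} ×ˢ range e) := disjoint_left.2 fun q hq hq' => by
    have := mem_triangle.1 hq
    rw [mem_singleton.1 (mem_product.1 hq').1] at this
    omega
  rw [triangleUnionRow, card_union_of_disjoint hdisj, card_product, card_singleton, card_range,
    one_mul, add_mul, card_triangle_mul_two]
  ring

theorem sub_le_card_filter_fst_triangleUnionRow (n e j : ℕ) :
    n - j ≤ #((triangleUnionRow n e).filter (·.1 = j)) :=
  calc n - j = #((triangle n).filter (·.1 = j)) := by simp [filter_fst_triangle]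
    _ ≤ _ := card_le_card (filter_subset_filter _ subset_union_left)

def natGridEmbedding (K : Type*) [AddMonoidWithOne K] [CharZero K] : ℕ × ℕ ↪ (Fin 3 → K) where
  toFun q := ![1, (q.1 : K), q.2]
  inj' _ _ h := Prod.ext (Nat.cast_injective (congrFun h 1)) (Nat.cast_injective (congrFun h 2))

/-- For `k ≥ 2` and `c₂ ≥ k² + k` there is a set `Z` of `c₂ + k²` pairwise
non-proportional nonzero vectors in `ℂ³` such that no nonzero form of degree `2k - 1`
vanishes on `Z` and, for each `p ∈ Z`, no nonzero form of degree `2k - 3` vanishes on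
`Z \ {p}` (the Cayley–Bacharach configuration of Theorem 3.1). -/
theorem exists_cayley_bacharach_configuration (k c₂ : ℕ) (hk : 2 ≤ k)
    (hc : k ^ 2 + k ≤ c₂) :
    ∃ Z : Finset (Fin 3 → ℂ),
      Z.card = c₂ + k ^ 2 ∧ (∀ v ∈ Z, v ≠ 0) ∧ PairwiseNonProportional Z ∧
      (∀ f : MvPolynomial (Fin 3) ℂ,
        f ∈ MvPolynomial.homogeneousSubmodule (Fin 3) ℂ (2 * k - 1) →
        (∀ v ∈ Z, MvPolynomial.eval v f = 0) → f = 0) ∧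
      (∀ p ∈ Z, ∀ f : MvPolynomial (Fin 3) ℂ,
        f ∈ MvPolynomial.homogeneousSubmodule (Fin 3) ℂ (2 * k - 3) →
        (∀ v ∈ Z.erase p, MvPolynomial.eval v f = 0) → f = 0) := by
  set S := triangleUnionRow (2 * k) (c₂ - (k ^ 2 + k))
  have hcard : #S = c₂ + k ^ 2 := by
    have hS := card_triangleUnionRow_mul_two (2 * k) (c₂ - (k ^ 2 + k))
    have he : c₂ - (k ^ 2 + k) + (k ^ 2 + k) = c₂ := Nat.sub_add_cancel hc
    linarith
  have hrow : ∀ j, 2 * k - j ≤ #(S.filter (·.1 = j)) :=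
    sub_le_card_filter_fst_triangleUnionRow _ _
  have hone : ∀ v ∈ S.map (natGridEmbedding ℂ), v 0 = 1 := fun v hv => by
    obtain ⟨q, -, rfl⟩ := mem_map.1 hv
    rfl
  refine ⟨S.map (natGridEmbedding ℂ), by rw [card_map, hcard],
    fun v hv h0 => by simpa [h0] using hone v hv,
    pairwiseNonProportional_of_forall_apply_zero_eq_one hone, fun f hf hvan => ?_,
    fun p hp f hf hvan => ?_⟩
  · exact MvPolynomial.IsHomogeneous.eq_zero_of_forall_eval_natCast_rows (n := 2 * k) hf
      (by omega) S (fun j _ => hrow j) fun q hq => hvan _ (mem_map_of_mem _ hq)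
  · obtain ⟨q, -, rfl⟩ := mem_map.1 hp
    refine MvPolynomial.IsHomogeneous.eq_zero_of_forall_eval_natCast_rows (n := 2 * k - 2) hf
      (by omega) (S.erase q) (fun j _ => ?_) fun q' hq' => hvan _ ?_
    · rw [filter_erase]
      have := hrow j
      have := pred_card_le_card_erase (s := S.filter (·.1 = j)) (a := q)
      omega
    · rw [← map_erase]
      exact mem_map_of_mem _ hq'
end
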